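/- In the quotient graph G/∼₃CC obtained by contracting each 3-edge-connected component of G to a single vertex, no two distinct vertices are 3-edge-connected. -/

import Mathlib

namespace TCW

/-- A multigraph: a type of vertices, a type of edges, and an incidence map
assigning to each edge its (unordered) pair of endpoints. -/
structure Multigraph (V E : Type) where
  inc : E → Sym2 V

namespace Multigraph

variable {V E : Type}

/-- The multigraph has no loops. -/
def Loopless (G : Multigraph V E) : Prop := ∀ e : E, ¬ (G.inc e).IsDiag

/-- Walks in a multigraph. -/
inductive Walk (G : Multigraph V E) : V → V → Type where
  | nil (v : V) : Walk G v v
  | cons {u v w : V} (e : E) (he : G.inc e = s(u, v)) (tail : Walk G v w) : Walk G u w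

namespace Walk

variable {G : Multigraph V E}

/-- The list of edges traversed by a walk. -/
def edges : ∀ {u v : V}, G.Walk u v → List E
  | _, _, .nil _ => []
  | _, _, .cons e _ p => e :: p.edges

/-- The list of vertices visited by a walk (in order). -/
def support : ∀ {u v : V}, G.Walk u v → List V
  | u, _, .nil _ => [u]
  | u, _, .cons _ _ p => u :: p.support

/-- A walk is a path if it visits no vertex twice. -/
def IsPath {u v : V} (p : G.Walk u v) : Prop := p.support.Nodup

/-- A closed walk is a cycle if it is nonempty, repeats no edge, and its
vertices are pairwise distinct except for the common endpoint. -/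
def IsCycle {u : V} (p : G.Walk u u) : Prop :=
  p.edges ≠ [] ∧ p.edges.Nodup ∧ p.support.tail.Nodup

end Walk

/-- Two walks are edge-disjoint if they share no edge. -/
def EdgeDisjoint {G : Multigraph V E} {u v u' v' : V}
    (p : G.Walk u v) (q : G.Walk u' v') : Prop :=
  ∀ e : E, e ∈ p.edges → e ∉ q.edges

/-- There exist three pairwise edge-disjoint paths from `u` to `v`. -/
def ThreePaths (G : Multigraph V E) (u v : V) : Prop :=
  ∃ (p₁ p₂ p₃ : G.Walk u v), p₁.IsPath ∧ p₂.IsPath ∧ p₃.IsPath ∧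
    EdgeDisjoint p₁ p₂ ∧ EdgeDisjoint p₁ p₃ ∧ EdgeDisjoint p₂ p₃

/-- `u` and `v` are 3-edge-connected: they are equal or joined by three
pairwise edge-disjoint paths. -/
def ThreeEC (G : Multigraph V E) (u v : V) : Prop := u = v ∨ ThreePaths G u v

/-- The set of edges crossing the vertex set `A` (i.e. the cut `δ(A)`). -/
def delta (G : Multigraph V E) (A : Set V) : Set E :=
  {e | ∃ x y, G.inc e = s(x, y) ∧ x ∈ A ∧ y ∉ A}

/-- The edge sets of cycles of `G`. -/
def cycleSets (G : Multigraph V E) : Set (Set E) :=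
  {C | ∃ (u : V) (p : G.Walk u u), p.IsCycle ∧ C = {e | e ∈ p.edges}}

/-- A cactus: any two distinct cycles are edge-disjoint (equivalently, every
2-connected block is a single edge or a cycle). -/
def IsCactus (G : Multigraph V E) : Prop :=
  ∀ C₁ ∈ G.cycleSets, ∀ C₂ ∈ G.cycleSets, C₁ ≠ C₂ → C₁ ∩ C₂ = ∅

/-- The quotient multigraph of `G` by a setoid on vertices: vertices are the
equivalence classes, and every edge of `G` whose endpoints lie in different
classes gives one edge; edges inside a class are discarded. -/
def quot (G : Multigraph V E) (s : Setoid V) :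
    Multigraph (Quotient s) {e : E // ¬ (Sym2.map (Quotient.mk s) (G.inc e)).IsDiag} :=
  ⟨fun e => Sym2.map (Quotient.mk s) (G.inc e.1)⟩

/-- The setoid of 3-edge-connectedness (its classes are the
3-edge-connected components). -/
def tccSetoid (G : Multigraph V E) : Setoid V := Relation.EqvGen.setoid (ThreeEC G)

/-- `H` is an immersion of `G`: vertices of `H` map injectively to vertices
of `G`, and edges of `H` map to pairwise edge-disjoint paths of `G`, the path
of an edge connecting the images of its endpoints. -/
def IsImmersion {V₁ E₁ V₂ E₂ : Type} (H : Multigraph V₁ E₁) (G : Multigraph V₂ E₂) : Prop :=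
  ∃ (f : V₁ → V₂) (P : E₁ → (u : V₂) × (v : V₂) × G.Walk u v),
    Function.Injective f ∧
    (∀ e : E₁, Sym2.map f (H.inc e) = s((P e).1, (P e).2.1)) ∧
    (∀ e : E₁, (P e).2.2.IsPath) ∧
    (∀ e₁ e₂ : E₁, e₁ ≠ e₂ → EdgeDisjoint (P e₁).2.2 (P e₂).2.2)

section Torso

variable (G : Multigraph V E) (A : Set V)

/-- Two vertices outside `A` are related if joined by a walk avoiding `A`. -/
def compRel (x y : {v : V // v ∉ A}) : Prop :=
  ∃ p : G.Walk x.1 y.1, ∀ w ∈ p.support, w ∉ A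

/-- The setoid whose classes are the connected components of `G - A`. -/
def compSetoid : Setoid {v : V // v ∉ A} := Relation.EqvGen.setoid (G.compRel A)

/-- The component `Z` of `G - A` is attached to the vertex `a ∈ A` by some edge. -/
def Attached (Z : Quotient (G.compSetoid A)) (a : {v : V // v ∈ A}) : Prop :=
  ∃ (e : E) (z : {v : V // v ∉ A}), Quotient.mk (G.compSetoid A) z = Z ∧ G.inc e = s(a.1, z.1)

/-- Edges of `G` with both endpoints in `A`, recorded together with their
endpoints as vertices of the torso. -/
def InnerE : Type :=
  {q : E × Sym2 {v : V // v ∈ A} // G.inc q.1 = Sym2.map Subtype.val q.2}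

/-- Replacement edges: one for each connected component of `G - A` having
exactly two (distinct) neighbours in `A`; its endpoints are those neighbours. -/
def RepE : Type :=
  {q : Quotient (G.compSetoid A) × Sym2 {v : V // v ∈ A} //
    ¬ q.2.IsDiag ∧ {a | a ∈ q.2} = {a | G.Attached A q.1 a}}

/-- The torso of `A` in `G`: keep the edges inside `A`, and for each
connected component of `G - A` with exactly two neighbours in `A`, add a
replacement edge between those neighbours. -/
def torso : Multigraph {v : V // v ∈ A} (G.InnerE A ⊕ G.RepE A) :=
  ⟨Sum.elim (fun q => q.1.2) (fun q => q.1.2)⟩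

end Torso

end Multigraph

open Multigraph

/-- A tree-cut decomposition of `G` with nodes `N`: a tree on `N` together
with a near-partition of the vertices of `G` into bags indexed by `N`. -/
structure TreeCutDecomp (G : Multigraph V E) (N : Type) where
  tree : SimpleGraph N
  isTree : tree.IsTree
  bag : N → Set V
  bag_disjoint : ∀ n₁ n₂ : N, n₁ ≠ n₂ → bag n₁ ∩ bag n₂ = ∅
  bag_covers : ∀ v : V, ∃ t : N, v ∈ bag t

namespace TreeCutDecomp

variable {V E N : Type} {G : Multigraph V E}

/-- The adhesion of the tree edge `n₁n₂`: all edges of `G` whose endpoints lie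
in bags of nodes in different components of the tree minus that edge. -/
def adhE (D : TreeCutDecomp G N) (n₁ n₂ : N) : Set E :=
  {e | ∃ (x y : V) (p q : N), G.inc e = s(x, y) ∧ x ∈ D.bag p ∧ y ∈ D.bag q ∧
    ¬ (D.tree.deleteEdges {s(n₁, n₂)}).Reachable p q}

/-- The adhesion of a node: the union of the adhesions of the bold
(adhesion of size at least 3) tree edges incident to it. -/
def adhN (D : TreeCutDecomp G N) (t : N) : Set E :=
  {e | ∃ n : N, D.tree.Adj n t ∧ 3 ≤ (D.adhE n t).ncard ∧ e ∈ D.adhE n t}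

/-- The decomposition has adhesion-width at most `a`. -/
def AdhWidthLE (D : TreeCutDecomp G N) (a : ℕ) : Prop := ∀ t : N, (D.adhN t).ncard ≤ a

/-- The decomposition has bag-width at most `b`. -/
def BagWidthLE (D : TreeCutDecomp G N) (b : ℕ) : Prop := ∀ t : N, (D.bag t).ncard ≤ b

/-- The adhesion-width: the maximum size of a node adhesion. -/
noncomputable def adhWidth [Fintype N] (D : TreeCutDecomp G N) : ℕ :=
  Finset.univ.sup fun t : N => (D.adhN t).ncard

/-- The bag-width: the maximum size of a bag. -/
noncomputable def bagWidth [Fintype N] (D : TreeCutDecomp G N) : ℕ :=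
  Finset.univ.sup fun t : N => (D.bag t).ncard

open Classical in
/-- GPRTW's width: the maximum over tree edges of the adhesion size, and over
nodes `t` of `|X_t|` plus the number of bold tree edges incident to `t`. -/
noncomputable def gprtwWidth [Fintype N] (D : TreeCutDecomp G N) : ℕ :=
  max
    (Finset.univ.sup fun p : N × N =>
      if D.tree.Adj p.1 p.2 then (D.adhE p.1 p.2).ncard else 0)
    (Finset.univ.sup fun t : N =>
      (D.bag t).ncard + {n : N | D.tree.Adj n t ∧ 3 ≤ (D.adhE n t).ncard}.ncard)

end TreeCutDecomp

/-- A slab in `G`: a connected subgraph (given by its vertex and edge sets)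
together with a nonempty core that is 3-edge-connected in `G`. -/
structure Slab (G : Multigraph V E) where
  verts : Set V
  edgeSet : Set E
  edge_mem : ∀ e ∈ edgeSet, ∀ x ∈ G.inc e, x ∈ verts
  conn : ∀ x ∈ verts, ∀ y ∈ verts, ∃ p : G.Walk x y,
    (∀ w ∈ p.support, w ∈ verts) ∧ (∀ e ∈ p.edges, e ∈ edgeSet)
  core : Set V
  core_sub : core ⊆ verts
  core_nonempty : core.Nonempty
  core_tec : ∀ x ∈ core, ∀ y ∈ core, ThreeEC G x y

/-- A set `F` of edges disconnects a slab if two core vertices lie in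
different components of the slab minus `F`. -/
def Slab.Disconnects {G : Multigraph V E} (F : Set E) (s : Slab G) : Prop :=
  ∃ x ∈ s.core, ∃ y ∈ s.core, ¬ ∃ p : G.Walk x y,
    (∀ w ∈ p.support, w ∈ s.verts) ∧ (∀ e ∈ p.edges, e ∈ s.edgeSet ∧ e ∉ F)

/-- A bramble: a family of pairwise touching slabs (cores pairwise intersect). -/
def IsBramble {G : Multigraph V E} (B : Set (Slab G)) : Prop :=
  ∀ s₁ ∈ B, ∀ s₂ ∈ B, (s₁.core ∩ s₂.core).Nonempty

/-- The bramble has adhesion-order at least `a`: every edge set disconnecting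
all its slabs has at least `a` edges. -/
def AdhOrderGE {G : Multigraph V E} (B : Set (Slab G)) (a : ℕ) : Prop :=
  ∀ F : Set E, (∀ s ∈ B, Slab.Disconnects F s) → a ≤ F.ncard

/-- The bramble has bag-order at least `b`: every core has at least `b` vertices. -/
def BagOrderGE {G : Multigraph V E} (B : Set (Slab G)) (b : ℕ) : Prop :=
  ∀ s ∈ B, b ≤ s.core.ncard

/-- An `(a,b)`-tangle: a consistent orientation of all edge separations of
order `< a` avoiding the collection `Σ_{a,b}` of small stars. An oriented
separation `(A, B)` is represented by its first side `A` (so `B = Aᶜ`). -/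
def IsTangle (G : Multigraph V E) (a b : ℕ) (L : Set (Set V)) : Prop :=
  (∀ A ∈ L, (G.delta A).ncard < a) ∧
  (∀ A : Set V, (G.delta A).ncard < a → (A ∈ L ↔ Aᶜ ∉ L)) ∧
  (∀ A ∈ L, ∀ C ∈ L, (Aᶜ ∩ Cᶜ).Nonempty) ∧
  (∀ σ : Set (Set V), σ ⊆ L → σ.Nonempty →
    (∀ A ∈ σ, ∀ C ∈ σ, A ≠ C → A ∩ C = ∅) →
    ¬ ((⋃ A ∈ {A ∈ σ | 3 ≤ (G.delta A).ncard}, G.delta A).ncard < a ∧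
       (⋂ A ∈ σ, Aᶜ).ncard < b))

/-!
Cuts with at most two edges are unions of 3-edge-connected classes: a split class would contain
two 3-edge-connected vertices on opposite sides, and each of their three edge-disjoint paths
crosses the cut. Such a cut therefore descends to a cut of the quotient with at most two edges.
Hence, if the classes of `x` and `y` are joined by three edge-disjoint paths in the quotient, every
cut of `G` separating `x` from `y` has at least three edges, and the edge version of Menger's
theorem, obtained by augmenting unit-capacity flows, makes `x` and `y` 3-edge-connected.
-/

namespace Multigraph

variable {V E : Type} {G : Multigraph V E}

namespace Walk

def darts : ∀ {u v : V}, G.Walk u v → List (E × V × V)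
  | _, _, .nil _ => []
  | _, _, @cons _ _ _ u m _ e _ p => (e, u, m) :: p.darts

theorem edges_eq_map_darts {u v : V} (p : G.Walk u v) : p.edges = p.darts.map Prod.fst := by
  induction p with
  | nil => rfl
  | cons e he p ih => simp [edges, darts, ih]

theorem start_mem_support {u v : V} (p : G.Walk u v) : u ∈ p.support := by
  cases p <;> simp [support]

theorem mem_support_of_mem_edges {u v x : V} {p : G.Walk u v} {e : E} (he : e ∈ p.edges)
    (hx : x ∈ G.inc e) : x ∈ p.support := by
  induction p with
  | nil => simp [edges] at he
  | @cons u m w e' he' p ih =>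
    rcases List.mem_cons.1 he with rfl | he
    · rw [he', Sym2.mem_iff] at hx
      rcases hx with rfl | rfl
      exacts [List.mem_cons_self, List.mem_cons_of_mem _ p.start_mem_support]
    · exact List.mem_cons_of_mem _ (ih he)

theorem IsPath.edges_nodup {u v : V} {p : G.Walk u v} (hp : p.IsPath) : p.edges.Nodup := by
  induction p with
  | nil => simp [edges]
  | @cons u m w e he p ih =>
    obtain ⟨hu, hp⟩ := List.nodup_cons.1 hp
    exact List.nodup_cons.2
      ⟨fun hep => hu (mem_support_of_mem_edges hep (he ▸ Sym2.mem_mk_left u m)), ih hp⟩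

theorem IsPath.darts_nodup {u v : V} {p : G.Walk u v} (hp : p.IsPath) : p.darts.Nodup :=
  .of_map Prod.fst (p.edges_eq_map_darts ▸ hp.edges_nodup)

theorem exists_suffix_of_mem_support {u v x : V} (p : G.Walk u v) (hx : x ∈ p.support) :
    ∃ q : G.Walk x v, q.support <:+ p.support ∧ q.darts ⊆ p.darts := by
  induction p with
  | nil v =>
    obtain rfl : x = v := by simpa [support] using hx
    exact ⟨nil x, List.suffix_refl _, List.Subset.refl _⟩
  | @cons u m w e he p ih =>
    by_cases hxp : x ∈ p.support
    · obtain ⟨q, hqs, hqd⟩ := ih hxp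
      exact ⟨q, hqs.trans (List.suffix_cons _ _), List.Subset.trans hqd (List.subset_cons_self _ _)⟩
    · obtain rfl : x = u := by simpa [support, hxp] using hx
      exact ⟨cons e he p, List.suffix_refl _, List.Subset.refl _⟩

theorem exists_isPath_darts_subset {u v : V} (p : G.Walk u v) :
    ∃ q : G.Walk u v, q.IsPath ∧ q.darts ⊆ p.darts := by
  induction p with
  | nil v => exact ⟨nil v, List.nodup_singleton v, List.Subset.refl _⟩
  | @cons u m w e he p ih =>
    obtain ⟨q, hq, hqp⟩ := ih
    by_cases hu : u ∈ q.support
    · obtain ⟨r, hrs, hrd⟩ := q.exists_suffix_of_mem_support hu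
      exact ⟨r, List.Nodup.sublist hrs.sublist hq,
        List.Subset.trans (List.Subset.trans hrd hqp) (List.subset_cons_self _ _)⟩
    · exact ⟨cons e he q, List.nodup_cons.2 ⟨hu, hq⟩, List.cons_subset_cons _ hqp⟩

theorem exists_isPath_of_reflTransGen {P : E × V × V → Prop} {u v : V}
    (h : Relation.ReflTransGen (fun x y => ∃ e, G.inc e = s(x, y) ∧ P (e, x, y)) u v) :
    ∃ p : G.Walk u v, p.IsPath ∧ ∀ d ∈ p.darts, P d := by
  suffices ∃ p : G.Walk u v, ∀ d ∈ p.darts, P d by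
    obtain ⟨p, hp⟩ := this
    obtain ⟨q, hq, hqp⟩ := p.exists_isPath_darts_subset
    exact ⟨q, hq, fun d hd => hp d (hqp hd)⟩
  induction h using Relation.ReflTransGen.head_induction_on with
  | refl => exact ⟨nil v, by simp [darts]⟩
  | head hstep _ ih =>
    obtain ⟨e, he, hP⟩ := hstep
    obtain ⟨p, hp⟩ := ih
    exact ⟨cons e he p, fun d hd => (List.mem_cons.1 hd).elim (· ▸ hP) (hp d)⟩

theorem exists_mem_edges_mem_delta {A : Set V} {u v : V} (p : G.Walk u v) (hu : u ∈ A)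
    (hv : v ∉ A) : ∃ e ∈ p.edges, e ∈ G.delta A := by
  induction p with
  | nil => exact absurd hu hv
  | @cons u m w e he p ih =>
    by_cases hm : m ∈ A
    · obtain ⟨e', he', hd⟩ := ih hm hv
      exact ⟨e', List.mem_cons_of_mem _ he', hd⟩
    · exact ⟨e, List.mem_cons_self, u, m, he, hu, hm⟩

end Walk

/-- A unit-capacity integral flow, encoded by the darts `(e, a, b)` carrying it (edge `e`
traversed from `a` to `b`); each edge carries at most one dart. -/
structure IsPartialOrientation (G : Multigraph V E) (D : Finset (E × V × V)) : Prop where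
  inc_eq : ∀ d ∈ D, G.inc d.1 = s(d.2.1, d.2.2)
  injOn_fst : Set.InjOn Prod.fst (D : Set (E × V × V))

theorem IsPartialOrientation.mono {D D' : Finset (E × V × V)} (hD : IsPartialOrientation G D)
    (h : D' ⊆ D) : IsPartialOrientation G D' :=
  ⟨fun d hd => hD.inc_eq d (h hd), hD.injOn_fst.mono (Finset.coe_subset.2 h)⟩

section Flow

open Finset

variable [DecidableEq V]

def unitNetOut (a b : V) : V → ℤ := Pi.single a 1 - Pi.single b 1

def netOut (D : Finset (E × V × V)) : V → ℤ := ∑ d ∈ D, unitNetOut d.2.1 d.2.2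

theorem unitNetOut_self (a : V) : unitNetOut a a = 0 := sub_self _

theorem unitNetOut_add_unitNetOut (a b c : V) :
    unitNetOut a b + unitNetOut b c = unitNetOut a c := by
  simp only [unitNetOut]; abel

theorem neg_unitNetOut (a b : V) : -unitNetOut a b = unitNetOut b a := neg_sub _ _

theorem sum_unitNetOut (S : Finset V) (a b : V) :
    ∑ w ∈ S, unitNetOut a b w = (if a ∈ S then 1 else 0) - (if b ∈ S then 1 else 0) := by
  simp [unitNetOut, sum_sub_distrib, sum_pi_single']

theorem card_leaving_sub_card_entering {D : Finset (E × V × V)} {u v : V} {k : ℕ}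
    (hD : netOut D = k • unitNetOut u v) {A : Set V} [DecidablePred (· ∈ A)]
    (hu : u ∈ A) (hv : v ∉ A) :
    (#{d ∈ D | d.2.1 ∈ A ∧ d.2.2 ∉ A} : ℤ) - #{d ∈ D | d.2.1 ∉ A ∧ d.2.2 ∈ A} = k := by
  set S := {w ∈ insert u (D.image (·.2.1) ∪ D.image (·.2.2)) | w ∈ A}
  have hS : ∀ w, w ∈ insert u (D.image (·.2.1) ∪ D.image (·.2.2)) → (w ∈ S ↔ w ∈ A) := by
    intro w hw; simp [S, hw]
  have hvalue : ∑ w ∈ S, netOut D w = k := by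
    simp only [hD, Pi.smul_apply, ← smul_sum, sum_unitNetOut]
    simp [(hS u (mem_insert_self _ _)).2 hu, S, hv]
  have hcount : ∑ w ∈ S, netOut D w =
      ∑ d ∈ D, ((if d.2.1 ∈ A then 1 else 0) - (if d.2.2 ∈ A then 1 else 0)) := by
    simp only [netOut, Finset.sum_apply]
    rw [sum_comm]
    refine sum_congr rfl fun d hd => ?_
    simp only [sum_unitNetOut,
      hS _ (mem_insert_of_mem (mem_union_left _ (mem_image_of_mem _ hd))),
      hS _ (mem_insert_of_mem (mem_union_right _ (mem_image_of_mem _ hd)))]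
  rw [← hvalue, hcount, natCast_card_filter, natCast_card_filter, ← sum_sub_distrib]
  refine sum_congr rfl fun d _ => ?_
  by_cases h₁ : d.2.1 ∈ A <;> by_cases h₂ : d.2.2 ∈ A <;> simp [h₁, h₂]

theorem IsPartialOrientation.exists_isPath {D : Finset (E × V × V)} {u v : V} {k : ℕ}
    (hD : IsPartialOrientation G D) (hnet : netOut D = (k + 1) • unitNetOut u v) :
    ∃ p : G.Walk u v, p.IsPath ∧ ∀ d ∈ p.darts, d ∈ D := by
  classical
  set A := {x | Relation.ReflTransGen (fun x y => ∃ e, G.inc e = s(x, y) ∧ (e, x, y) ∈ D) u x}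
  by_cases hv : v ∈ A
  · exact Walk.exists_isPath_of_reflTransGen hv
  have hval := card_leaving_sub_card_entering hnet (A := A) Relation.ReflTransGen.refl hv
  have hleaving : {d ∈ D | d.2.1 ∈ A ∧ d.2.2 ∉ A} = ∅ :=
    filter_eq_empty_iff.2 fun d hd ⟨ha, hb⟩ => hb (ha.tail ⟨d.1, hD.inc_eq d hd, hd⟩)
  rw [hleaving, card_empty] at hval
  omega

variable [DecidableEq E]

theorem netOut_toFinset_darts {u v : V} {p : G.Walk u v} (hp : p.darts.Nodup) :
    netOut p.darts.toFinset = unitNetOut u v := by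
  induction p with
  | nil v => simp [Walk.darts, netOut, unitNetOut_self]
  | @cons u m w e he p ih =>
    obtain ⟨hnotin, hp⟩ := List.nodup_cons.1 hp
    simp only [Walk.darts, List.toFinset_cons, netOut] at hnotin ⊢
    rw [sum_insert (List.mem_toFinset.not.2 hnotin), ← netOut, ih hp, unitNetOut_add_unitNetOut]

theorem IsPartialOrientation.exists_isPath_netOut_sdiff {D : Finset (E × V × V)} {u v : V}
    {k : ℕ} (hD : IsPartialOrientation G D) (hnet : netOut D = (k + 1) • unitNetOut u v) :
    ∃ p : G.Walk u v, p.IsPath ∧ (∀ d ∈ p.darts, d ∈ D) ∧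
      IsPartialOrientation G (D \ p.darts.toFinset) ∧
      netOut (D \ p.darts.toFinset) = k • unitNetOut u v := by
  obtain ⟨p, hp, hpD⟩ := hD.exists_isPath hnet
  refine ⟨p, hp, hpD, hD.mono sdiff_subset, ?_⟩
  rw [netOut, sum_sdiff_eq_sub fun d hd => hpD d (List.mem_toFinset.1 hd), ← netOut, ← netOut,
    netOut_toFinset_darts hp.darts_nodup, hnet, succ_nsmul, add_sub_cancel_right]

theorem edgeDisjoint_of_darts_subset {D : Finset (E × V × V)}
    (hD : Set.InjOn Prod.fst (D : Set (E × V × V))) {a b c d : V} {p : G.Walk a b}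
    {q : G.Walk c d} (hp : ∀ x ∈ p.darts, x ∈ D) (hq : ∀ x ∈ q.darts, x ∈ D \ p.darts.toFinset) :
    EdgeDisjoint p q := by
  intro e hep heq
  rw [Walk.edges_eq_map_darts] at hep heq
  obtain ⟨x, hx, rfl⟩ := List.mem_map.1 hep
  obtain ⟨y, hy, hyx⟩ := List.mem_map.1 heq
  have hyD := mem_sdiff.1 (hq y hy)
  exact hyD.2 (List.mem_toFinset.2 (hD hyD.1 (hp x hx) hyx ▸ hx))

theorem IsPartialOrientation.threePaths {D : Finset (E × V × V)} {u v : V}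
    (hD : IsPartialOrientation G D) (hnet : netOut D = 3 • unitNetOut u v) : ThreePaths G u v := by
  obtain ⟨p₁, hp₁, hp₁D, hD₁, hnet₁⟩ := hD.exists_isPath_netOut_sdiff hnet
  obtain ⟨p₂, hp₂, hp₂D, hD₂, hnet₂⟩ := hD₁.exists_isPath_netOut_sdiff hnet₁
  obtain ⟨p₃, hp₃, hp₃D, -⟩ := hD₂.exists_isPath_netOut_sdiff (k := 0) (by rw [hnet₂])
  refine ⟨p₁, p₂, p₃, hp₁, hp₂, hp₃, edgeDisjoint_of_darts_subset hD.injOn_fst hp₁D hp₂D,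
    edgeDisjoint_of_darts_subset hD.injOn_fst hp₁D fun x hx => sdiff_subset (hp₃D x hx),
    edgeDisjoint_of_darts_subset hD₁.injOn_fst hp₂D hp₃D⟩

def IsResidual (D : Finset (E × V × V)) (d : E × V × V) : Prop :=
  (d.1, d.2.2, d.2.1) ∈ D ∨ d.1 ∉ D.image Prod.fst

def augment (D : Finset (E × V × V)) (d : E × V × V) : Finset (E × V × V) :=
  if (d.1, d.2.2, d.2.1) ∈ D then D.erase (d.1, d.2.2, d.2.1) else insert d D

theorem IsPartialOrientation.augment {D : Finset (E × V × V)} {d : E × V × V}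
    (hD : IsPartialOrientation G D) (hd : G.inc d.1 = s(d.2.1, d.2.2)) (hres : IsResidual D d) :
    IsPartialOrientation G (augment D d) := by
  unfold Multigraph.augment
  split_ifs with hrev
  · exact hD.mono (erase_subset _ _)
  have hfree : d.1 ∉ D.image Prod.fst := hres.resolve_left hrev
  have hdD : d ∉ D := fun h => hfree (mem_image_of_mem _ h)
  refine ⟨fun x hx => ?_, ?_⟩
  · rcases mem_insert.1 hx with rfl | hx
    exacts [hd, hD.inc_eq x hx]
  · rw [coe_insert, Set.injOn_insert (mem_coe.not.2 hdD)]
    exact ⟨hD.injOn_fst, by simpa using hfree⟩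

theorem netOut_augment {D : Finset (E × V × V)} {d : E × V × V} (hres : IsResidual D d) :
    netOut (augment D d) = netOut D + unitNetOut d.2.1 d.2.2 := by
  unfold augment netOut
  split_ifs with hrev
  · rw [sum_erase_eq_sub hrev, sub_eq_add_neg, neg_unitNetOut]
  · have hdD : d ∉ D := fun h => hres.resolve_left hrev (mem_image_of_mem _ h)
    rw [sum_insert hdD, add_comm]

theorem isResidual_augment_iff {D : Finset (E × V × V)} {d d' : E × V × V} (h : d'.1 ≠ d.1) :
    IsResidual (augment D d) d' ↔ IsResidual D d' := by
  unfold IsResidual augment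
  split_ifs <;> simp [Prod.ext_iff, h]

theorem IsPartialOrientation.exists_augment_walk {D : Finset (E × V × V)} {a b : V}
    (hD : IsPartialOrientation G D) (p : G.Walk a b) (hp : p.edges.Nodup)
    (hres : ∀ d ∈ p.darts, IsResidual D d) :
    ∃ D', IsPartialOrientation G D' ∧ netOut D' = netOut D + unitNetOut a b := by
  induction p generalizing D with
  | nil a => exact ⟨D, hD, by rw [unitNetOut_self, add_zero]⟩
  | @cons a m b e he p ih =>
    obtain ⟨hep, hp⟩ := List.nodup_cons.1 hp
    have hres₀ : IsResidual D (e, a, m) := hres _ List.mem_cons_self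
    have hres' : ∀ d ∈ p.darts, IsResidual (Multigraph.augment D (e, a, m)) d := by
      intro d hd
      have hde : d.1 ≠ e := fun h =>
        hep (h ▸ p.edges_eq_map_darts ▸ List.mem_map_of_mem hd)
      exact (isResidual_augment_iff hde).2 (hres d (List.mem_cons_of_mem _ hd))
    obtain ⟨D', hD', hnet⟩ := ih (hD.augment he hres₀) hp hres'
    refine ⟨D', hD', ?_⟩
    rw [hnet, netOut_augment hres₀, add_assoc, unitNetOut_add_unitNetOut]

/-- If `v` is not reachable along residual darts, the reachable set is a cut all of whose edges
carry flow out of it and none into it, so its size is the flow value `k`. -/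
theorem IsPartialOrientation.exists_succ {D : Finset (E × V × V)} {u v : V} {k : ℕ}
    (hD : IsPartialOrientation G D) (hnet : netOut D = k • unitNetOut u v)
    (hcut : ∀ A : Set V, u ∈ A → v ∉ A → (k + 1 : ℕ∞) ≤ (G.delta A).encard) :
    ∃ D', IsPartialOrientation G D' ∧ netOut D' = (k + 1) • unitNetOut u v := by
  classical
  set A := {x | Relation.ReflTransGen
    (fun x y => ∃ e, G.inc e = s(x, y) ∧ IsResidual D (e, x, y)) u x}
  by_cases hv : v ∈ A
  · obtain ⟨p, hp, hres⟩ := Walk.exists_isPath_of_reflTransGen hv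
    obtain ⟨D', hD', hnet'⟩ := hD.exists_augment_walk p hp.edges_nodup hres
    exact ⟨D', hD', by rw [hnet', hnet, succ_nsmul]⟩
  have hval := card_leaving_sub_card_entering hnet (A := A) Relation.ReflTransGen.refl hv
  have hentering : {d ∈ D | d.2.1 ∉ A ∧ d.2.2 ∈ A} = ∅ := by
    refine filter_eq_empty_iff.2 fun d hd ⟨ha, hb⟩ => ha (hb.tail ⟨d.1, ?_, Or.inl hd⟩)
    rw [hD.inc_eq d hd, Sym2.eq_swap]
  have hdelta : G.delta A ⊆ ({d ∈ D | d.2.1 ∈ A ∧ d.2.2 ∉ A}.image Prod.fst : Finset E) := by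
    rintro e ⟨x, y, hxy, hx, hy⟩
    have hnres : ¬ IsResidual D (e, x, y) := fun hres => hy (hx.tail ⟨e, hxy, hres⟩)
    simp only [IsResidual, not_or, not_not, mem_image] at hnres
    obtain ⟨hyx, d, hd, rfl⟩ := hnres
    rcases Sym2.eq_iff.1 ((hD.inc_eq d hd).symm.trans hxy) with ⟨h₁, h₂⟩ | ⟨h₁, h₂⟩
    · exact mem_image_of_mem _ (mem_filter.2 ⟨hd, h₁ ▸ hx, h₂ ▸ hy⟩)
    · exact absurd (h₁ ▸ h₂ ▸ hd) hyx
  have hle := (Set.encard_le_encard hdelta).trans_eq (Set.encard_coe_eq_coe_finsetCard _)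
  have := (hcut A Relation.ReflTransGen.refl hv).trans (hle.trans (Nat.cast_le.2 card_image_le))
  rw [hentering, card_empty] at hval
  norm_cast at this
  omega

theorem exists_isPartialOrientation_netOut_eq {u v : V} {k : ℕ}
    (hcut : ∀ A : Set V, u ∈ A → v ∉ A → (k : ℕ∞) ≤ (G.delta A).encard) :
    ∃ D : Finset (E × V × V), IsPartialOrientation G D ∧ netOut D = k • unitNetOut u v := by
  induction k with
  | zero => exact ⟨∅, ⟨by simp, by simp⟩, by simp [netOut]⟩
  | succ k ih =>
    obtain ⟨D, hD, hnet⟩ := ih fun A hu hv => le_trans (by norm_cast; omega) (hcut A hu hv)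
    exact hD.exists_succ hnet (by exact_mod_cast hcut)

end Flow

theorem threePaths_of_forall_three_le_encard_delta {u v : V}
    (h : ∀ A : Set V, u ∈ A → v ∉ A → 3 ≤ (G.delta A).encard) : ThreePaths G u v := by
  classical
  obtain ⟨D, hD, hnet⟩ := exists_isPartialOrientation_netOut_eq (k := 3) h
  exact hD.threePaths hnet

theorem delta_compl (A : Set V) : G.delta Aᶜ = G.delta A := by
  ext e
  constructor <;> rintro ⟨x, y, hxy, hx, hy⟩
  · exact ⟨y, x, hxy.trans Sym2.eq_swap, not_not.1 hy, hx⟩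
  · exact ⟨y, x, hxy.trans Sym2.eq_swap, hy, not_not.2 hx⟩

theorem ThreePaths.three_le_encard_delta {u v : V} {A : Set V} (h : ThreePaths G u v)
    (hu : u ∈ A) (hv : v ∉ A) : 3 ≤ (G.delta A).encard := by
  obtain ⟨p₁, p₂, p₃, -, -, -, h₁₂, h₁₃, h₂₃⟩ := h
  obtain ⟨e₁, he₁, hδ₁⟩ := p₁.exists_mem_edges_mem_delta hu hv
  obtain ⟨e₂, he₂, hδ₂⟩ := p₂.exists_mem_edges_mem_delta hu hv
  obtain ⟨e₃, he₃, hδ₃⟩ := p₃.exists_mem_edges_mem_delta hu hv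
  have hcard : ({e₁, e₂, e₃} : Set E).encard = 3 := Set.encard_eq_three.2
    ⟨e₁, e₂, e₃, fun h => h₁₂ e₁ he₁ (h ▸ he₂), fun h => h₁₃ e₁ he₁ (h ▸ he₃),
      fun h => h₂₃ e₂ he₂ (h ▸ he₃), rfl⟩
  rw [← hcard]
  exact Set.encard_le_encard (by simp [Set.insert_subset_iff, hδ₁, hδ₂, hδ₃])

theorem mem_iff_mem_of_eqvGen {A : Set V} (hA : (G.delta A).encard < 3) {x y : V}
    (h : Relation.EqvGen (ThreeEC G) x y) : x ∈ A ↔ y ∈ A := by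
  induction h with
  | rel x y hxy =>
    rcases hxy with rfl | hxy
    · rfl
    refine ⟨fun hx => ?_, fun hy => ?_⟩ <;> by_contra h
    · exact not_lt.2 (hxy.three_le_encard_delta hx h) hA
    · exact not_lt.2 (delta_compl A ▸ hxy.three_le_encard_delta (A := Aᶜ) h (not_not.2 hy)) hA
  | refl => rfl
  | symm _ _ _ ih => exact ih.symm
  | trans _ _ _ _ _ ih₁ ih₂ => exact ih₁.trans ih₂

theorem encard_delta_quot_le (s : Setoid V) (B : Set (Quotient s)) :
    ((G.quot s).delta B).encard ≤ (G.delta (Quotient.mk s ⁻¹' B)).encard := by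
  refine Set.encard_le_encard_of_injOn ?_ Subtype.val_injective.injOn
  rintro ⟨e, he⟩ ⟨X, Y, hXY, hX, hY⟩
  obtain ⟨⟨x, y⟩, hxy⟩ := Quot.exists_rep (G.inc e)
  change Sym2.map _ (G.inc e) = _ at hXY
  rw [← hxy] at hXY
  rcases Sym2.eq_iff.1 hXY with ⟨rfl, rfl⟩ | ⟨rfl, rfl⟩
  · exact ⟨x, y, hxy.symm, hX, hY⟩
  · exact ⟨y, x, hxy.symm.trans Sym2.eq_swap, hX, hY⟩

end Multigraph

theorem quot_tcc_not_threeEC_general {V E : Type}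
    (G : Multigraph V E) :
    ∀ X Y : Quotient (tccSetoid G), X ≠ Y →
      ¬ ThreeEC (G.quot (tccSetoid G)) X Y := by
  rintro X Y hXY (rfl | hpaths)
  · exact hXY rfl
  obtain ⟨x, rfl⟩ := Quotient.exists_rep X
  obtain ⟨y, rfl⟩ := Quotient.exists_rep Y
  refine hXY (Quotient.sound (Relation.EqvGen.rel _ _ (Or.inr ?_)))
  refine threePaths_of_forall_three_le_encard_delta fun A hx hy => ?_
  by_contra! hA
  have hsat : Quotient.mk _ ⁻¹' (Quotient.mk (tccSetoid G) '' A) = A :=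
    Set.ext fun z => ⟨fun ⟨w, hw, hwz⟩ => (mem_iff_mem_of_eqvGen hA (Quotient.exact hwz)).1 hw,
      fun hz => ⟨z, hz, rfl⟩⟩
  have h3 := hpaths.three_le_encard_delta (A := Quotient.mk _ '' A) ⟨x, hx, rfl⟩
    (by rwa [← Set.mem_preimage, hsat])
  have hle := (encard_delta_quot_le (G := G) _ (Quotient.mk _ '' A)).trans_eq (by rw [hsat])
  exact not_lt.2 (h3.trans hle) hA

/-- in the quotient of G by 3-edge-connectedness, no two distinct
vertices are 3-edge-connected. -/
theorem quot_tcc_not_threeEC {V E : Type} [Finite V] [Finite E]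
    (G : Multigraph V E) (hG : G.Loopless) :
    ∀ X Y : Quotient (tccSetoid G), X ≠ Y →
      ¬ ThreeEC (G.quot (tccSetoid G)) X Y :=
  quot_tcc_not_threeEC_general G

end TCW
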